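/- Let S ⊆ ℝ^d, r > r* > 0, and suppose S ⊕ r*B₁[0] ⊆ X ⊕ rB₁[0] for some set X ⊆ ℝ^d (B₁[0] the closed unit ball). Then C_{r*}(S) ⊖ (r − r*)B₁[0] ⊆ C_r(X), where C_ρ(A) = (A ⊕ ρB₁[0]) ⊖ ρB₁[0]. -/

import Mathlib

open Set Metric

/-- Minkowski sum. -/
def mSum {d : ℕ} (A C : Set (EuclideanSpace ℝ (Fin d))) : Set (EuclideanSpace ℝ (Fin d)) :=
  Set.image2 (· + ·) A C

/-- Minkowski erosion. -/
def mErode {d : ℕ} (A C : Set (EuclideanSpace ℝ (Fin d))) : Set (EuclideanSpace ℝ (Fin d)) :=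
  {x | ∀ c ∈ C, x + c ∈ A}

/-- The morphological closing `C_ρ(A) = (A ⊕ ρB₁[0]) ⊖ ρB₁[0]`. -/
def mClosing {d : ℕ} (ρ : ℝ) (A : Set (EuclideanSpace ℝ (Fin d))) :
    Set (EuclideanSpace ℝ (Fin d)) :=
  mErode (mSum A (closedBall (0 : EuclideanSpace ℝ (Fin d)) ρ))
    (closedBall (0 : EuclideanSpace ℝ (Fin d)) ρ)

theorem closing_erode_subset {d : ℕ} (r rstar : ℝ) (h0 : 0 < rstar) (hrr : rstar < r)
    (S X : Set (EuclideanSpace ℝ (Fin d)))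
    (hSX : mSum S (closedBall (0 : EuclideanSpace ℝ (Fin d)) rstar) ⊆
      mSum X (closedBall (0 : EuclideanSpace ℝ (Fin d)) r)) :
    mErode (mClosing rstar S) (closedBall (0 : EuclideanSpace ℝ (Fin d)) (r - rstar)) ⊆
      mClosing r X := by
  intro x hx c hc
  have hr : 0 < r := h0.trans hrr
  simp only [mem_closedBall, dist_zero_right] at hc
  set e := ((r - rstar)/r) • c with he
  set b := (rstar/r) • c with hb
  have hce : x + c = x + e + b := by
    rw [he, hb, add_assoc, ← add_smul]
    rw [← add_div, sub_add_cancel, div_self hr.ne', one_smul]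
  have hne : ‖e‖ ≤ r - rstar := by
    have hnn : (0:ℝ) ≤ (r - rstar)/r := div_nonneg (by linarith) hr.le
    rw [he, norm_smul, Real.norm_eq_abs, abs_of_nonneg hnn]
    calc (r - rstar)/r * ‖c‖ ≤ (r - rstar)/r * r := by
          apply mul_le_mul_of_nonneg_left hc hnn
      _ = r - rstar := by field_simp
  have hnb : ‖b‖ ≤ rstar := by
    have hnn : (0:ℝ) ≤ rstar/r := div_nonneg h0.le hr.le
    rw [hb, norm_smul, Real.norm_eq_abs, abs_of_nonneg hnn]
    calc rstar/r * ‖c‖ ≤ rstar/r * r := by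
          apply mul_le_mul_of_nonneg_left hc hnn
      _ = rstar := by field_simp
  have h1 : x + e ∈ mClosing rstar S := hx e (by simpa [mem_closedBall, dist_zero_right] using hne)
  have h2 : x + e + b ∈ mSum S (closedBall 0 rstar) :=
    h1 b (by simpa [mem_closedBall, dist_zero_right] using hnb)
  rw [hce]
  exact hSX h2
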